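/- arXiv:1506.01667 — 4 statements merged into one kernel-verified Lean document; each statement's English description precedes it below -/
import Mathlib

section
/- The 4×4 matrix A(u) with rows (v,0,0,B), (0,v,0,E), (0,0,v,D), (η,η,η,(3L-2)v/L), where L = 1-(B+E+D) and η = Lγ/(1-L) - v²/L², has eigenvalues λ = v (with multiplicity 2) and λ = (2L-1)v/L ± √((1-L)Δ), where Δ = Lγ/(1-L) - v²/L, provided 0 < L < 1 and Δ ≥ 0. -/
/-!
Expanding along the first row, the determinant of `X - A` for an arrowhead matrix
`[[a I₃, b], [cᵀ, d]]` is `(X - a)² ((X - a)(X - d) - b ⬝ c)`. Here `b ⬝ c = η (B + E + D) = η (1 - L)`,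
and the quadratic factor has trace `2 (2L - 1) v / L` and determinant
`((2L - 1) v / L)² - (1 - L) Δ`, so its roots are `(2L - 1) v / L ± √((1 - L) Δ)`.
-/

open Polynomial

theorem Matrix.charpoly_arrowhead {R : Type*} [CommRing R] (a d p q r s t u : R) :
    (Matrix.of ![![a, 0, 0, p], ![0, a, 0, q], ![0, 0, a, r], ![s, t, u, d]]).charpoly =
      (X - C a) ^ 2 * ((X - C a) * (X - C d) - C (p * s + q * t + r * u)) := by
  rw [Matrix.charpoly, Matrix.det_succ_row_zero]
  simp [Fin.sum_univ_succ, Matrix.det_fin_three, Matrix.charmatrix_apply, Fin.succAbove]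
  ring

theorem Polynomial.sub_C_mul_sub_C_sub_C {R : Type*} [CommRing R] {a d c m s : R}
    (hsum : a + d = 2 * m) (hprod : a * d - c = m ^ 2 - s ^ 2) :
    (X - C a) * (X - C d) - C c = (X - C (m + s)) * (X - C (m - s)) := by
  have hsum' := congrArg C hsum
  have hprod' := congrArg C hprod
  simp only [map_add, map_mul, map_sub, map_pow, map_ofNat] at hsum' hprod' ⊢
  linear_combination (-X) * hsum' + hprod'

theorem stmt_0_general (B E D v γ : ℝ)
    (L : ℝ) (hL : L = 1 - (B + E + D)) (hL0 : 0 < L) (hL1 : L < 1)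
    (η Δ : ℝ) (hη : η = L * γ / (1 - L) - v ^ 2 / L ^ 2)
    (hΔ : Δ = L * γ / (1 - L) - v ^ 2 / L) (hΔ0 : 0 ≤ Δ)
    (A : Matrix (Fin 4) (Fin 4) ℝ)
    (hA : A = Matrix.of ![![v, 0, 0, B], ![0, v, 0, E], ![0, 0, v, D],
      ![η, η, η, (3 * L - 2) * v / L]]) :
    A.charpoly =
      (X - C v) ^ 2 * (X - C ((2 * L - 1) * v / L + Real.sqrt ((1 - L) * Δ)))
        * (X - C ((2 * L - 1) * v / L - Real.sqrt ((1 - L) * Δ))) := by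
  have hL1ne : 1 - L ≠ 0 := by linarith
  have hsq : Real.sqrt ((1 - L) * Δ) ^ 2 = (1 - L) * Δ :=
    Real.sq_sqrt (mul_nonneg (by linarith) hΔ0)
  rw [hA, Matrix.charpoly_arrowhead, mul_assoc, Polynomial.sub_C_mul_sub_C_sub_C]
  · field_simp
    ring
  · have hcoupling : B * η + E * η + D * η = (1 - L) * η := by rw [hL]; ring
    rw [hcoupling, hsq, hΔ, hη]
    field_simp
    ring

/-- The Jacobian matrix of the biofilm flux has eigenvalues `v` (multiplicity 2)
and `(2L-1)v/L ± √((1-L)Δ)`: its characteristic polynomial factors accordingly. -/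
theorem stmt_0 (B E D v γ : ℝ) (hB : B ∈ Set.Ioo (0:ℝ) 1) (hE : E ∈ Set.Ioo (0:ℝ) 1)
    (hD : D ∈ Set.Ioo (0:ℝ) 1) (hγ : 0 < γ)
    (L : ℝ) (hL : L = 1 - (B + E + D)) (hL0 : 0 < L) (hL1 : L < 1)
    (η Δ : ℝ) (hη : η = L * γ / (1 - L) - v ^ 2 / L ^ 2)
    (hΔ : Δ = L * γ / (1 - L) - v ^ 2 / L) (hΔ0 : 0 ≤ Δ)
    (A : Matrix (Fin 4) (Fin 4) ℝ)
    (hA : A = Matrix.of ![![v, 0, 0, B], ![0, v, 0, E], ![0, 0, v, D],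
      ![η, η, η, (3 * L - 2) * v / L]]) :
    A.charpoly =
      (X - C v) ^ 2 * (X - C ((2 * L - 1) * v / L + Real.sqrt ((1 - L) * Δ)))
        * (X - C ((2 * L - 1) * v / L - Real.sqrt ((1 - L) * Δ))) :=
  stmt_0_general B E D v γ L hL hL0 hL1 η Δ hη hΔ hΔ0 A hA
end

section
/- Under the assumptions 0 < L < 1 and η > 0, the diagonal matrix A₀ = diag(η, Bη/E, Bη/D, B) is symmetric positive definite, and the product A₀·A is a symmetric matrix, where A is the 4×4 matrix with rows (v,0,0,B), (0,v,0,E), (0,0,v,D), (η,η,η,(3L-2)v/L). -/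
/-- The diagonal matrix `A₀ = diag(η, Bη/E, Bη/D, B)` is a positive definite
symmetrizer: `A₀` is positive definite and `A₀ * A` is symmetric. -/
theorem stmt_1 (B E D v γ : ℝ) (hB : B ∈ Set.Ioo (0:ℝ) 1) (hE : E ∈ Set.Ioo (0:ℝ) 1)
    (hD : D ∈ Set.Ioo (0:ℝ) 1) (hγ : 0 < γ)
    (L : ℝ) (hL : L = 1 - (B + E + D)) (hL0 : 0 < L) (hL1 : L < 1)
    (η : ℝ) (hη : η = L * γ / (1 - L) - v ^ 2 / L ^ 2) (hη0 : 0 < η)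
    (A A₀ : Matrix (Fin 4) (Fin 4) ℝ)
    (hA : A = Matrix.of ![![v, 0, 0, B], ![0, v, 0, E], ![0, 0, v, D],
      ![η, η, η, (3 * L - 2) * v / L]])
    (hA₀ : A₀ = Matrix.diagonal ![η, B * η / E, B * η / D, B]) :
    A₀.PosDef ∧ (A₀ * A).IsSymm := by
  obtain ⟨hB0, hB1⟩ := hB
  obtain ⟨hE0, hE1⟩ := hE
  obtain ⟨hD0, hD1⟩ := hD
  constructor
  · rw [hA₀, Matrix.posDef_diagonal_iff]
    intro i
    fin_cases i <;> simp <;> positivity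
  · rw [Matrix.IsSymm, hA, hA₀]
    ext i j
    fin_cases i <;> fin_cases j <;>
      simp [Matrix.mul_apply, Fin.sum_univ_four, Matrix.diagonal, mul_comm,
        div_mul_eq_mul_div, mul_div_assoc, ne_of_gt hE0, ne_of_gt hD0] <;>
      field_simp <;> ring
end

section
/- Under the assumption k_B > k_D > 0 and k_E, k_N, ε, α > 0, the equilibrium point (B̄, Ē, D̄) with B̄ = (1 - k_D/k_B)/(1 + α k_D/k_N + k_D k_E/(ε k_B)), Ē = (k_E k_D/(ε k_B)) B̄, D̄ = (α k_D/k_N) B̄ satisfies B̄, Ē, D̄ ∈ (0,1) and L̄ = 1-(B̄+Ē+D̄) ∈ (0,1). -/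
/-- The equilibrium fractions `B̄, Ē, D̄` and `L̄ = 1-(B̄+Ē+D̄)` all lie in `(0,1)`. -/
theorem stmt_5 (kB kD kE kN ε α : ℝ) (hkB : 0 < kB) (hkD : 0 < kD) (hkE : 0 < kE)
    (hkN : 0 < kN) (hε : 0 < ε) (hα : 0 < α) (hBD : kD < kB)
    (B' E' D' L' : ℝ)
    (hB' : B' = (1 - kD / kB) / (1 + α * kD / kN + kD * kE / (ε * kB)))
    (hE' : E' = (kE * kD / (ε * kB)) * B')
    (hD' : D' = (α * kD / kN) * B')
    (hL' : L' = 1 - (B' + E' + D')) :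
    B' ∈ Set.Ioo (0:ℝ) 1 ∧ E' ∈ Set.Ioo (0:ℝ) 1 ∧ D' ∈ Set.Ioo (0:ℝ) 1 ∧
      L' ∈ Set.Ioo (0:ℝ) 1 := by
  have hr : kD / kB < 1 := (div_lt_one hkB).2 hBD
  have hrpos : 0 < kD / kB := div_pos hkD hkB
  have ht0 : 0 < 1 - kD / kB := by linarith
  have ht1 : 1 - kD / kB < 1 := by linarith
  have hc1 : 0 < α * kD / kN := by positivity
  have hc2 : 0 < kD * kE / (ε * kB) := by positivity
  have hc2' : 0 < kE * kD / (ε * kB) := by positivity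
  have hden : 0 < 1 + α * kD / kN + kD * kE / (ε * kB) := by positivity
  have hBpos : 0 < B' := by rw [hB']; exact div_pos ht0 hden
  have hB1 : B' < 1 := by
    rw [hB', div_lt_one hden]; linarith
  have hBle : B' * (1 + α * kD / kN + kD * kE / (ε * kB)) = 1 - kD / kB := by
    rw [hB', div_mul_cancel₀ _ (ne_of_gt hden)]
  have hsum : B' + E' + D' = 1 - kD / kB := by
    rw [hE', hD', ← hBle]
    have : kE * kD / (ε * kB) = kD * kE / (ε * kB) := by ring
    rw [this]; ring
  have hEpos : 0 < E' := by rw [hE']; positivity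
  have hDpos : 0 < D' := by rw [hD']; positivity
  have hE1 : E' < 1 := by nlinarith
  have hD1 : D' < 1 := by nlinarith
  have hL : L' = kD / kB := by rw [hL', hsum]; ring
  exact ⟨⟨hBpos, hB1⟩, ⟨hEpos, hE1⟩, ⟨hDpos, hD1⟩, by rw [hL]; exact ⟨hrpos, hr⟩⟩
end

section
/- Let P(λ) = λ³ + a₁λ² + a₂λ + a₃ be a cubic with real coefficients. All roots of P have negative real part if and only if a₁ > 0, a₃ > 0, and a₁a₂ - a₃ > 0 (the Routh–Hurwitz conditions for a cubic). -/
open Polynomial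

/-- Hurwitz criterion for a monic real quadratic. -/
lemma quad_hurwitz (b c : ℝ) :
    (∀ z : ℂ, z ^ 2 + (b : ℂ) * z + (c : ℂ) = 0 → z.re < 0) ↔ 0 < b ∧ 0 < c := by
  constructor
  · intro h
    rcases le_or_gt (4 * c) (b ^ 2) with hd | hd
    · -- two real roots
      set s := Real.sqrt (b ^ 2 - 4 * c) with hs
      have hs2 : s ^ 2 = b ^ 2 - 4 * c := Real.sq_sqrt (by linarith)
      have hsnn : 0 ≤ s := Real.sqrt_nonneg _
      have h1 : (((-b + s) / 2 : ℝ) : ℂ) ^ 2 + (b : ℂ) * (((-b + s) / 2 : ℝ) : ℂ)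
          + (c : ℂ) = 0 := by
        push_cast
        have : (s : ℂ) ^ 2 = (b : ℂ) ^ 2 - 4 * c := by exact_mod_cast hs2
        linear_combination (1 / 4 : ℂ) * this
      have h2 : (((-b - s) / 2 : ℝ) : ℂ) ^ 2 + (b : ℂ) * (((-b - s) / 2 : ℝ) : ℂ)
          + (c : ℂ) = 0 := by
        push_cast
        have : (s : ℂ) ^ 2 = (b : ℂ) ^ 2 - 4 * c := by exact_mod_cast hs2
        linear_combination (1 / 4 : ℂ) * this
      have r1 := h _ h1
      have r2 := h _ h2
      simp only [Complex.ofReal_re] at r1 r2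
      constructor
      · linarith
      · nlinarith
    · -- complex conjugate pair
      set s := Real.sqrt (4 * c - b ^ 2) with hs
      have hs2 : s ^ 2 = 4 * c - b ^ 2 := Real.sq_sqrt (by linarith)
      have h1 : ((-b / 2 : ℝ) + (s / 2 : ℝ) * Complex.I) ^ 2
          + (b : ℂ) * ((-b / 2 : ℝ) + (s / 2 : ℝ) * Complex.I) + (c : ℂ) = 0 := by
        have hI : Complex.I ^ 2 = -1 := Complex.I_sq
        have : (s : ℂ) ^ 2 = 4 * (c : ℂ) - (b : ℂ) ^ 2 := by exact_mod_cast hs2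
        push_cast
        linear_combination ((s : ℂ) ^ 2 / 4) * hI + (-1 / 4 : ℂ) * this
      have r1 := h _ h1
      simp at r1
      constructor
      · linarith
      · nlinarith
  · rintro ⟨hb, hc⟩ z hz
    have hre : z.re ^ 2 - z.im ^ 2 + b * z.re + c = 0 := by
      have := congrArg Complex.re hz
      simp [pow_two, Complex.add_re, Complex.mul_re] at this
      nlinarith [this]
    have him : z.im * (2 * z.re + b) = 0 := by
      have := congrArg Complex.im hz
      simp [pow_two, Complex.add_im, Complex.mul_im] at this
      nlinarith [this]
    rcases mul_eq_zero.mp him with h0 | h0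
    · -- real root
      by_contra hzr
      push_neg at hzr
      rw [h0] at hre
      nlinarith
    · linarith

/-- Routh–Hurwitz criterion for a monic real cubic: all complex roots have
negative real part iff `a₁ > 0`, `a₃ > 0` and `a₁a₂ - a₃ > 0`. -/
theorem stmt_7 (a₁ a₂ a₃ : ℝ)
    (P : Polynomial ℂ)
    (hP : P = X ^ 3 + C (a₁ : ℂ) * X ^ 2 + C (a₂ : ℂ) * X + C (a₃ : ℂ)) :
    (∀ z : ℂ, P.IsRoot z → z.re < 0) ↔ (0 < a₁ ∧ 0 < a₃ ∧ 0 < a₁ * a₂ - a₃) := by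
  -- a real cubic has a real root, by the intermediate value theorem
  set f : ℝ → ℝ := fun x => x ^ 3 + a₁ * x ^ 2 + a₂ * x + a₃ with hf
  obtain ⟨r, hr⟩ : ∃ r : ℝ, f r = 0 := by
    set M : ℝ := 1 + |a₁| + |a₂| + |a₃| with hM
    have hM1 : 1 ≤ M := by
      have := abs_nonneg a₁; have := abs_nonneg a₂; have := abs_nonneg a₃; linarith
    have hcont : ContinuousOn f (Set.Icc (-M) M) := by fun_prop
    have habs1 := abs_le.mp (le_refl |a₁|)
    have habs2 := abs_le.mp (le_refl |a₂|)
    have habs3 := abs_le.mp (le_refl |a₃|)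
    have hfM : 0 ≤ f M := by
      simp only [hf]
      nlinarith [sq_nonneg M, habs1.1, habs1.2, habs2.1, habs2.2, habs3.1, habs3.2]
    have hfmM : f (-M) ≤ 0 := by
      simp only [hf]
      nlinarith [sq_nonneg M, habs1.1, habs1.2, habs2.1, habs2.2, habs3.1, habs3.2]
    have := intermediate_value_Icc (by linarith : (-M : ℝ) ≤ M) hcont
    have h0 : (0 : ℝ) ∈ Set.Icc (f (-M)) (f M) := ⟨hfmM, hfM⟩
    obtain ⟨r, _, hr⟩ := this h0
    exact ⟨r, hr⟩
  set b : ℝ := a₁ + r with hb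
  set c : ℝ := a₂ + a₁ * r + r ^ 2 with hc
  have ha₃ : a₃ = -(r * c) := by
    rw [hc]; simp only [hf] at hr; linear_combination hr
  -- factor the cubic
  have hkey : ∀ z : ℂ, z ^ 3 + (a₁ : ℂ) * z ^ 2 + (a₂ : ℂ) * z + (a₃ : ℂ)
      = (z - (r : ℝ)) * (z ^ 2 + (b : ℂ) * z + (c : ℂ)) := by
    intro z
    have h3 : (a₃ : ℂ) = -((r : ℂ) * (c : ℂ)) := by exact_mod_cast ha₃
    have hbC : (b : ℂ) = (a₁ : ℂ) + (r : ℂ) := by push_cast [hb]; ring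
    have hcC : (c : ℂ) = (a₂ : ℂ) + (a₁ : ℂ) * (r : ℂ) + (r : ℂ) ^ 2 := by
      push_cast [hc]; ring
    rw [h3, hbC, hcC]; ring
  have hroot : ∀ z : ℂ, P.IsRoot z ↔ (z = (r : ℂ) ∨ z ^ 2 + (b : ℂ) * z + (c : ℂ) = 0) := by
    intro z
    rw [hP]
    simp only [IsRoot, eval_add, eval_mul, eval_pow, eval_X, eval_C]
    rw [hkey z, mul_eq_zero, sub_eq_zero]
  have main : (∀ z : ℂ, P.IsRoot z → z.re < 0) ↔ (r < 0 ∧ 0 < b ∧ 0 < c) := by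
    constructor
    · intro h
      have hr0 : r < 0 := by
        have := h (r : ℂ) ((hroot _).mpr (Or.inl rfl))
        simpa using this
      refine ⟨hr0, (quad_hurwitz b c).mp ?_⟩
      intro z hz
      exact h z ((hroot _).mpr (Or.inr hz))
    · rintro ⟨hr0, hb0, hc0⟩ z hz
      rcases (hroot z).mp hz with h | h
      · rw [h]; simpa using hr0
      · exact (quad_hurwitz b c).mpr ⟨hb0, hc0⟩ z h
  rw [main]
  have ha1 : a₁ = b - r := by rw [hb]; ring
  have ha2 : a₂ = c - r * b := by rw [hc, hb]; ring
  constructor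
  · rintro ⟨hr0, hb0, hc0⟩
    refine ⟨by linarith [ha1 ▸ sub_pos.mpr (lt_trans hr0 hb0)], ?_, ?_⟩
    · rw [ha₃]; nlinarith
    · rw [ha1, ha2, ha₃]
      have h1 : 0 < c - r * b + r ^ 2 := by nlinarith
      nlinarith [mul_pos hb0 h1]
  · rintro ⟨h1, h2, h3⟩
    rw [ha₃] at h2
    rw [ha1] at h1
    rw [ha1, ha2, ha₃] at h3
    have hkey3 : 0 < b * (c - r * b + r ^ 2) := by nlinarith
    have hr0 : r < 0 := by
      by_contra hr0
      push_neg at hr0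
      have hrpos : 0 < r := by
        rcases lt_or_eq_of_le hr0 with h | h
        · exact h
        · exfalso; rw [← h] at h2; simp at h2
      have hcneg : c < 0 := by nlinarith
      have hbpos : r < b := by linarith
      have hb' : 0 < b := lt_trans hrpos hbpos
      have hneg : c - r * b + r ^ 2 < 0 := by
        nlinarith [mul_pos hrpos (sub_pos.mpr hbpos)]
      have := mul_neg_of_pos_of_neg hb' hneg
      linarith
    have hc0 : 0 < c := by nlinarith
    have hb0 : 0 < b := by
      by_contra hb0
      push_neg at hb0
      have hbneg : b < 0 := by
        rcases lt_or_eq_of_le hb0 with h | h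
        · exact h
        · exfalso; rw [h] at hkey3; simp at hkey3
      have : c - r * b + r ^ 2 < 0 := by
        rcases mul_pos_iff.mp hkey3 with ⟨h', _⟩ | ⟨_, h'⟩
        · linarith
        · exact h'
      have hx := mul_neg_of_neg_of_pos hr0 (by linarith : (0:ℝ) < b - r)
      nlinarith [hx]
    exact ⟨hr0, hb0, hc0⟩
end
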